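/- arXiv:1612.07366 — 3 statements merged into one kernel-verified Lean document; each statement's English description precedes it below -/
import Mathlib

section
/- Let M₁ be the minor of K_{N,N} (N ≥ 2) obtained by contracting two non-adjacent edges, and M₂ the graph obtained by contracting two adjacent edges. Then M₂ is isomorphic to a subgraph of M₁ (both have 2N−2 vertices, and M₁ has strictly more edges when N ≥ 3). -/
/-- The graph obtained from `G` by identifying vertices according to the setoid `s`:
two classes are adjacent iff they are distinct and joined by an edge of `G`
(parallel edges merged, loops removed). -/
def SimpleGraph.contractS {V : Type*} (G : SimpleGraph V) (s : Setoid V) :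
    SimpleGraph (Quotient s) where
  Adj x y := x ≠ y ∧ ∃ u v, G.Adj u v ∧ Quotient.mk s u = x ∧ Quotient.mk s v = y
  symm := ⟨by rintro x y ⟨hne, u, v, h, hu, hv⟩; exact ⟨hne.symm, v, u, h.symm, hv, hu⟩⟩
  loopless := ⟨by rintro x ⟨hne, -⟩; exact hne rfl⟩

/-!
Both contractions are kernels of explicit retractions of `Fin N ⊕ Fin N`: contracting the
edges `x₁y₁, x₂y₂` sends `y₁ ↦ x₁, y₂ ↦ x₂`, and contracting the star `uw, uw'` sends
`w, w' ↦ u`, after possibly exchanging the two sides of `K_{N,N}` (an automorphism). Hence each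
quotient has `2N - 2` elements. Take side-preserving permutations with `u ↦ x₁`, `w ↦ y₁`,
`w' ↦ y₂`, and then fold `w'` onto `y₁` instead: two vertices have images identified in `M₁`
exactly when they lie in the star, so this endomorphism of `K_{N,N}` induces an injective
homomorphism `M₂ → M₁`. For `N ≥ 3` pick a left vertex `z ∉ {x₁, x₂}`: in `M₁` it is
adjacent to the class `{x₂, y₂}` through `y₂`, while its preimage and that of `{x₂, y₂}` are two
singletons on the same side of `M₂`, which are not adjacent. So `M₁` has an edge more than the
copy of `M₂`.
-/

open Function Relation Sum

variable {α : Type*}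

theorem Relation.EqvGen.setoid_eq_ker_of_retraction {r : α → α → Prop} {φ : α → α}
    (hr : ∀ a b, r a b → φ a = φ b) (hφ : ∀ a, EqvGen r a (φ a)) :
    EqvGen.setoid r = Setoid.ker φ :=
  Setoid.ext fun a b =>
    ⟨fun h => (Setoid.ker φ).iseqv.eqvGen_iff.1 (EqvGen.mono hr a b h),
      fun h => (hφ a).trans _ _ _ (h ▸ (hφ b).symm)⟩

theorem Setoid.card_quotient_ker_of_range_eq_compl {β : Type*} [Finite β] {φ : α → β}
    {D : Set β} (h : Set.range φ = Dᶜ) :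
    Nat.card (Quotient (Setoid.ker φ)) = Nat.card β - D.ncard := by
  rw [Nat.card_congr (Setoid.quotientKerEquivRange φ), h, Nat.card_coe_set_eq, Set.ncard_compl]

section Redirect

variable [DecidableEq α] {d₁ c₁ d₂ c₂ : α}

def redirect (d₁ c₁ d₂ c₂ a : α) : α :=
  if a = d₁ then c₁ else if a = d₂ then c₂ else a

theorem eqvGen_setoid_eq_ker_redirect {r : α → α → Prop}
    (hr : ∀ a b, r a b → redirect d₁ c₁ d₂ c₂ a = redirect d₁ c₁ d₂ c₂ b)
    (h₁ : EqvGen r d₁ c₁) (h₂ : EqvGen r d₂ c₂) :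
    EqvGen.setoid r = Setoid.ker (redirect d₁ c₁ d₂ c₂) := by
  refine EqvGen.setoid_eq_ker_of_retraction hr fun a => ?_
  unfold redirect
  split_ifs with ha₁ ha₂
  · exact ha₁ ▸ h₁
  · exact ha₂ ▸ h₂
  · exact EqvGen.refl a

theorem range_redirect (hc₁ : c₁ ≠ d₁ ∧ c₁ ≠ d₂) (hc₂ : c₂ ≠ d₁ ∧ c₂ ≠ d₂) :
    Set.range (redirect d₁ c₁ d₂ c₂) = {d₁, d₂}ᶜ := by
  ext a
  simp only [Set.mem_range, Set.mem_compl_iff, Set.mem_insert_iff, Set.mem_singleton_iff, not_or]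
  constructor
  · rintro ⟨b, rfl⟩
    unfold redirect
    split_ifs <;> tauto
  · rintro ⟨h₁, h₂⟩
    exact ⟨a, by simp [redirect, h₁, h₂]⟩

theorem redirect_eq_iff {a p : α} (hd₁ : p ≠ d₁) (hd₂ : p ≠ d₂) (hc₁ : p ≠ c₁) (hc₂ : p ≠ c₂) :
    redirect d₁ c₁ d₂ c₂ a = p ↔ a = p := by
  unfold redirect
  split_ifs <;> grind

theorem Equiv.apply_redirect {β : Type*} [DecidableEq β] (e : α ≃ β) (a : α) :
    e (redirect d₁ c₁ d₂ c₂ a) = redirect (e d₁) (e c₁) (e d₂) (e c₂) (e a) := by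
  simp only [redirect, e.apply_eq_iff_eq]
  split_ifs <;> rfl

end Redirect

namespace SimpleGraph

variable {V W : Type*} {G : SimpleGraph V} {H : SimpleGraph W} {s : Setoid V} {t : Setoid W}

theorem contractS_adj_mk_of_adj {a b : V} (h : G.Adj a b)
    (hne : Quotient.mk s a ≠ Quotient.mk s b) :
    (G.contractS s).Adj (Quotient.mk s a) (Quotient.mk s b) :=
  ⟨hne, a, b, h, rfl, rfl⟩

theorem adj_of_contractS_adj_mk {a b : V} (ha : ∀ a', s a' a → a' = a)
    (hb : ∀ b', s b' b → b' = b) (h : (G.contractS s).Adj (Quotient.mk s a) (Quotient.mk s b)) :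
    G.Adj a b := by
  obtain ⟨-, a', b', hab', ha', hb'⟩ := h
  rwa [← ha a' (Quotient.exact ha'), ← hb b' (Quotient.exact hb')]

def Copy.contractS (g : G →g H) (hg : s = t.comap g) : Copy (G.contractS s) (H.contractS t) where
  toHom :=
    { toFun := Quotient.map g fun a b h => by subst hg; exact h
      map_rel' := by
        rintro _ _ ⟨hne, a, b, hab, rfl, rfl⟩
        refine ⟨fun h => hne ?_, g a, g b, g.map_adj hab, rfl, rfl⟩
        subst hg
        exact Quotient.sound (Quotient.exact (s := t) h) }
  injective' := by
    rintro ⟨a⟩ ⟨b⟩ h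
    subst hg
    exact Quotient.sound (Quotient.exact (s := t) h)

theorem Copy.ncard_edgeSet_lt [Finite W] {G : SimpleGraph α} (f : Copy G H) {a b : α}
    (hab : ¬ G.Adj a b) (hf : H.Adj (f a) (f b)) : G.edgeSet.ncard < H.edgeSet.ncard := by
  have hinj : Injective (Sym2.map f) := Sym2.map.injective f.injective
  have himage : Sym2.map f '' G.edgeSet ⊂ H.edgeSet := by
    refine (Set.ssubset_iff_of_subset ?_).2 ⟨s(f a, f b), hf, ?_⟩
    · rintro _ ⟨e, he, rfl⟩
      exact f.toHom.map_mem_edgeSet he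
    · rintro ⟨e, he, hfe⟩
      rw [← Sym2.map_mk, hinj.eq_iff] at hfe
      rw [hfe] at he
      exact hab he
  calc G.edgeSet.ncard = (Sym2.map f '' G.edgeSet).ncard :=
        (Set.ncard_image_of_injective _ hinj).symm
    _ < H.edgeSet.ncard := Set.ncard_lt_ncard himage

def Iso.completeBipartiteGraphComm (V W : Type*) :
    completeBipartiteGraph V W ≃g completeBipartiteGraph W V where
  toEquiv := Equiv.sumComm V W
  map_rel_iff' := by rintro (a | a) (b | b) <;> simp [completeBipartiteGraph]

def Hom.completeBipartiteGraphMap {V' W' : Type*} (f : V → V') (g : W → W') :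
    completeBipartiteGraph V W →g completeBipartiteGraph V' W' where
  toFun := Sum.map f g
  map_rel' := by rintro (a | a) (b | b) <;> simp [completeBipartiteGraph]

end SimpleGraph

section CompleteBipartite

open SimpleGraph

variable {N : ℕ}

local notation "K" N:max => completeBipartiteGraph (Fin N) (Fin N)

def pairRetraction (x₁ y₁ x₂ y₂ : Fin N) : Fin N ⊕ Fin N → Fin N ⊕ Fin N :=
  redirect (inr y₁) (inl x₁) (inr y₂) (inl x₂)

def starRetraction (u w w' : Fin N) : Fin N ⊕ Fin N → Fin N ⊕ Fin N :=
  redirect (inr w) (inl u) (inr w') (inl u)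

theorem eqvGen_setoid_pair_eq_ker {x₁ y₁ x₂ y₂ : Fin N} (hy : y₁ ≠ y₂) :
    EqvGen.setoid (fun p q => (p = inl x₁ ∧ q = inr y₁) ∨ (p = inl x₂ ∧ q = inr y₂)) =
      Setoid.ker (pairRetraction x₁ y₁ x₂ y₂) := by
  refine eqvGen_setoid_eq_ker_redirect ?_ (.symm _ _ (.rel _ _ (.inl ⟨rfl, rfl⟩)))
    (.symm _ _ (.rel _ _ (.inr ⟨rfl, rfl⟩)))
  rintro _ _ (⟨rfl, rfl⟩ | ⟨rfl, rfl⟩) <;> simp [redirect, hy.symm]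

theorem exists_eqvGen_setoid_star_eq_ker {u₁ w₁ u₂ w₂ : Fin N}
    (hshare : (u₁ = u₂ ∧ w₁ ≠ w₂) ∨ (u₁ ≠ u₂ ∧ w₁ = w₂)) :
    ∃ (κ : K N ≃g K N) (u w w' : Fin N), w ≠ w' ∧
      EqvGen.setoid (fun p q => (p = inl u₁ ∧ q = inr w₁) ∨ (p = inl u₂ ∧ q = inr w₂)) =
        Setoid.ker (starRetraction u w w' ∘ κ.symm) := by
  rcases hshare with ⟨rfl, hw⟩ | ⟨hu, rfl⟩
  · refine ⟨.refl, u₁, w₁, w₂, hw, ?_⟩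
    refine eqvGen_setoid_eq_ker_redirect ?_ (.symm _ _ (.rel _ _ (.inl ⟨rfl, rfl⟩)))
      (.symm _ _ (.rel _ _ (.inr ⟨rfl, rfl⟩)))
    rintro _ _ (⟨rfl, rfl⟩ | ⟨rfl, rfl⟩) <;> simp [redirect, hw.symm]
  · let κ := Iso.completeBipartiteGraphComm (Fin N) (Fin N)
    refine ⟨κ, w₁, u₁, u₂, hu, ?_⟩
    have hconj : Setoid.ker (starRetraction w₁ u₁ u₂ ∘ κ.symm) =
        Setoid.ker (redirect (inl u₁) (inr w₁) (inl u₂) (inr w₁)) := by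
      ext a b
      obtain ⟨a, rfl⟩ := κ.surjective a
      obtain ⟨b, rfl⟩ := κ.surjective b
      simp only [Setoid.ker_def, comp_apply, starRetraction]
      rw [← (Equiv.sumComm (Fin N) (Fin N)).injective.eq_iff, Equiv.apply_redirect,
        Equiv.apply_redirect]
      simp [κ, Iso.completeBipartiteGraphComm]
    rw [hconj]
    refine eqvGen_setoid_eq_ker_redirect ?_ (.rel _ _ (.inl ⟨rfl, rfl⟩))
      (.rel _ _ (.inr ⟨rfl, rfl⟩))
    rintro _ _ (⟨rfl, rfl⟩ | ⟨rfl, rfl⟩) <;> simp [redirect, hu.symm]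

theorem exists_hom_ker_star_eq_comap_ker_pair (κ : K N ≃g K N) {u w w' : Fin N} (hw : w ≠ w')
    {x₁ y₁ x₂ y₂ : Fin N} (hy : y₁ ≠ y₂) :
    ∃ g : K N →g K N,
      Setoid.ker (starRetraction u w w' ∘ κ.symm) =
        (Setoid.ker (pairRetraction x₁ y₁ x₂ y₂)).comap g ∧
      ∀ x ≠ x₁, ∃ i ≠ u, g (κ (inl i)) = inl x := by
  obtain ⟨τ, hτ⟩ := Equiv.Perm.exists_extending_pair ![w, w'] ![y₁, y₂] (by simpa) (by simpa)
  have hτw : τ w = y₁ := hτ 0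
  have hτw' : τ w' = y₂ := hτ 1
  let σ := Equiv.swap u x₁
  let fold j := if j = w' then y₁ else τ j
  have key : ∀ b, pairRetraction x₁ y₁ x₂ y₂ (Sum.map σ fold b) =
      Sum.map σ τ (starRetraction u w w' b) := by
    rintro (i | j)
    · simp [pairRetraction, starRetraction, redirect]
    by_cases hj : j = w
    · subst hj
      simp [pairRetraction, starRetraction, redirect, fold, σ, hw, hτw]
    by_cases hj' : j = w'
    · subst hj'
      simp [pairRetraction, starRetraction, redirect, fold, σ]
    have h₁ : τ j ≠ y₁ := hτw ▸ τ.injective.ne hj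
    have h₂ : τ j ≠ y₂ := hτw' ▸ τ.injective.ne hj'
    simp [pairRetraction, starRetraction, redirect, fold, hj, hj', h₁, h₂]
  refine ⟨(Hom.completeBipartiteGraphMap σ fold).comp κ.symm.toHom, Setoid.ext fun a b => ?_,
    fun x hx => ⟨σ x, ?_, ?_⟩⟩
  · change _ ↔ pairRetraction x₁ y₁ x₂ y₂ (Sum.map σ fold (κ.symm a)) =
      pairRetraction x₁ y₁ x₂ y₂ (Sum.map σ fold (κ.symm b))
    rw [key, key, (Sum.map_injective.2 ⟨σ.injective, τ.injective⟩).eq_iff]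
    rfl
  · rwa [Ne, Equiv.swap_apply_eq_iff, Equiv.swap_apply_left]
  · change Sum.map σ fold (κ.symm (κ (inl (σ x)))) = inl x
    simp [σ]

theorem not_adj_contractS_ker_star (κ : K N ≃g K N) {u w w' i i' : Fin N} (hi : i ≠ u)
    (hi' : i' ≠ u) :
    ¬ ((K N).contractS (Setoid.ker (starRetraction u w w' ∘ κ.symm))).Adj
      (Quotient.mk _ (κ (inl i))) (Quotient.mk _ (κ (inl i'))) := by
  have hsingleton : ∀ {i}, i ≠ u → ∀ a,
      Setoid.ker (starRetraction u w w' ∘ κ.symm) a (κ (inl i)) → a = κ (inl i) := by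
    intro i hi a ha
    have hi : inl i ≠ (inl u : Fin N ⊕ Fin N) := by simpa
    rwa [Setoid.ker_def, comp_apply, comp_apply, RelIso.symm_apply_apply, starRetraction,
      (redirect_eq_iff inl_ne_inr inl_ne_inr hi hi).2 rfl,
      redirect_eq_iff inl_ne_inr inl_ne_inr hi hi, κ.symm_apply_eq] at ha
  intro h
  have h := adj_of_contractS_adj_mk (hsingleton hi) (hsingleton hi') h
  rw [Iso.map_adj_iff] at h
  simp [completeBipartiteGraph] at h

theorem adj_contractS_ker_pair {x₁ y₁ x₂ y₂ z : Fin N} (hy : y₁ ≠ y₂) (hz : z ≠ x₂) :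
    ((K N).contractS (Setoid.ker (pairRetraction x₁ y₁ x₂ y₂))).Adj
      (Quotient.mk _ (inl x₂)) (Quotient.mk _ (inl z)) := by
  have hy₂ : Quotient.mk (Setoid.ker (pairRetraction x₁ y₁ x₂ y₂)) (inr y₂) =
      Quotient.mk _ (inl x₂) :=
    Quotient.sound (by simp [Setoid.ker_def, pairRetraction, redirect, hy.symm])
  rw [← hy₂]
  refine contractS_adj_mk_of_adj (by simp [completeBipartiteGraph]) ?_
  rw [hy₂, Ne, Quotient.eq, Setoid.ker_def]
  simpa [pairRetraction, redirect] using hz.symm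

theorem card_quotient_ker_pair {x₁ y₁ x₂ y₂ : Fin N} (hy : y₁ ≠ y₂) :
    Nat.card (Quotient (Setoid.ker (pairRetraction x₁ y₁ x₂ y₂))) = 2 * N - 2 := by
  rw [pairRetraction, Setoid.card_quotient_ker_of_range_eq_compl
    (range_redirect (by simp) (by simp)), Set.ncard_pair (by simpa using hy)]
  simp [two_mul]

theorem card_quotient_ker_star (κ : K N ≃g K N) {u w w' : Fin N} (hw : w ≠ w') :
    Nat.card (Quotient (Setoid.ker (starRetraction u w w' ∘ κ.symm))) = 2 * N - 2 := by
  rw [starRetraction, Setoid.card_quotient_ker_of_range_eq_compl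
    ((EquivLike.range_comp _ _).trans (range_redirect (by simp) (by simp))),
    Set.ncard_pair (by simpa using hw)]
  simp [two_mul]

end CompleteBipartite

theorem contract_adjacent_vs_nonadjacent_general (N : ℕ)
    (x1 y1 x2 y2 : Fin N) (hx : x1 ≠ x2) (hy : y1 ≠ y2)
    (u1 w1 u2 w2 : Fin N)
    (hshare : (u1 = u2 ∧ w1 ≠ w2) ∨ (u1 ≠ u2 ∧ w1 = w2)) :
    let G := completeBipartiteGraph (Fin N) (Fin N)
    let s1 : Setoid (Fin N ⊕ Fin N) := Relation.EqvGen.setoid fun p q =>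
      (p = Sum.inl x1 ∧ q = Sum.inr y1) ∨ (p = Sum.inl x2 ∧ q = Sum.inr y2)
    let s2 : Setoid (Fin N ⊕ Fin N) := Relation.EqvGen.setoid fun p q =>
      (p = Sum.inl u1 ∧ q = Sum.inr w1) ∨ (p = Sum.inl u2 ∧ q = Sum.inr w2)
    let M1 := G.contractS s1
    let M2 := G.contractS s2
    (∃ f : Quotient s2 ↪ Quotient s1, ∀ a b, M2.Adj a b → M1.Adj (f a) (f b)) ∧
      Nat.card (Quotient s2) = 2 * N - 2 ∧
      Nat.card (Quotient s1) = 2 * N - 2 ∧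
      (3 ≤ N → M2.edgeSet.ncard < M1.edgeSet.ncard) := by
  obtain ⟨κ, u, w, w', hw, hs2⟩ := exists_eqvGen_setoid_star_eq_ker hshare
  obtain ⟨g, hg, hg_inl⟩ := exists_hom_ker_star_eq_comap_ker_pair κ hw (x₁ := x1) (x₂ := x2) hy
  rw [eqvGen_setoid_pair_eq_ker hy, hs2]
  intro G s1 s2 M1 M2
  let f : SimpleGraph.Copy M2 M1 := SimpleGraph.Copy.contractS g hg
  refine ⟨⟨f.toEmbedding, fun a b => f.toHom.map_adj⟩, card_quotient_ker_star κ hw,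
    card_quotient_ker_pair hy, fun hN => ?_⟩
  obtain ⟨z, hz₁, hz₂⟩ := Fin.exists_ne_and_ne_of_two_lt x1 x2 hN
  obtain ⟨i, hi, hgi⟩ := hg_inl x2 hx.symm
  obtain ⟨i', hi', hgi'⟩ := hg_inl z hz₁
  have hM1 := adj_contractS_ker_pair (x₁ := x1) hy hz₂
  rw [← hgi, ← hgi'] at hM1
  exact f.ncard_edgeSet_lt (not_adj_contractS_ker_star κ hi hi') hM1

/-- Let `M₁` be obtained from `K_{N,N}` (`N ≥ 2`) by contracting the two non-adjacent
edges `(x₁,y₁), (x₂,y₂)` and `M₂` by contracting the two adjacent edges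
`(u₁,w₁), (u₂,w₂)` (sharing exactly one endpoint). Then `M₂` is isomorphic to a
subgraph of `M₁`, both have `2N - 2` vertices, and `M₁` has strictly more edges
when `N ≥ 3`. -/
theorem contract_adjacent_vs_nonadjacent (N : ℕ) (hN : 2 ≤ N)
    (x1 y1 x2 y2 : Fin N) (hx : x1 ≠ x2) (hy : y1 ≠ y2)
    (u1 w1 u2 w2 : Fin N)
    (hshare : (u1 = u2 ∧ w1 ≠ w2) ∨ (u1 ≠ u2 ∧ w1 = w2)) :
    let G := completeBipartiteGraph (Fin N) (Fin N)
    let s1 : Setoid (Fin N ⊕ Fin N) := Relation.EqvGen.setoid fun p q =>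
      (p = Sum.inl x1 ∧ q = Sum.inr y1) ∨ (p = Sum.inl x2 ∧ q = Sum.inr y2)
    let s2 : Setoid (Fin N ⊕ Fin N) := Relation.EqvGen.setoid fun p q =>
      (p = Sum.inl u1 ∧ q = Sum.inr w1) ∨ (p = Sum.inl u2 ∧ q = Sum.inr w2)
    let M1 := G.contractS s1
    let M2 := G.contractS s2
    (∃ f : Quotient s2 ↪ Quotient s1, ∀ a b, M2.Adj a b → M1.Adj (f a) (f b)) ∧
      Nat.card (Quotient s2) = 2 * N - 2 ∧
      Nat.card (Quotient s1) = 2 * N - 2 ∧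
      (3 ≤ N → M2.edgeSet.ncard < M1.edgeSet.ncard) :=
  contract_adjacent_vs_nonadjacent_general N x1 y1 x2 y2 hx hy u1 w1 u2 w2 hshare
end

section
/- For the graph M_k obtained from K_{N,N} by contracting a matching of size k (1 ≤ k ≤ N−1), M_k is not isomorphic to any subgraph of M_j for any j < k. -/
open Function Set Sum

theorem Setoid.apply_eq_of_mk_eq_eqvGen {α γ : Type*} {r : α → α → Prop} {f : α → γ}
    (hf : ∀ x y, r x y → f x = f y) {x y : α}
    (h : Quotient.mk (Relation.EqvGen.setoid r) x = Quotient.mk _ y) : f x = f y :=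
  Setoid.eqvGen_le (s := Setoid.ker f) hf (Quotient.exact h)

theorem exists_notMem_range_of_card_lt {α β : Type*} [Fintype α] [Fintype β] (f : α → β)
    (h : Fintype.card α < Fintype.card β) : ∃ y, y ∉ range f := by
  by_contra! hf
  exact (Fintype.card_le_of_surjective f hf).not_gt h

namespace SimpleGraph

theorem colorable_of_isIndepSet_cover {V W : Type*} [Fintype W] {G : SimpleGraph V}
    (S : W → Set V) (hS : ∀ w, G.IsIndepSet (S w)) (hcover : ∀ v, ∃ w, v ∈ S w) :
    G.Colorable (Fintype.card W) := by
  choose color hcolor using hcover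
  refine (Coloring.mk color fun {v v'} hadj hc => ?_).colorable
  exact hS (color v) (hcolor v) (hc ▸ hcolor v') hadj.ne hadj

end SimpleGraph

section MatchingContraction

variable {ι α β : Type*}

def matchingSetoid (a : ι → α) (b : ι → β) : Setoid (α ⊕ β) :=
  Relation.EqvGen.setoid fun p q => ∃ i, p = inl (a i) ∧ q = inr (b i)

abbrev matchingContraction (a : ι → α) (b : ι → β) :
    SimpleGraph (Quotient (matchingSetoid a b)) :=
  (completeBipartiteGraph α β).contractS (matchingSetoid a b)

variable {a : ι → α} {b : ι → β}

local notation "⟦" p "⟧ₘ" => (Quotient.mk (matchingSetoid a b) p)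

namespace matchingSetoid

theorem mk_inr_eq_mk_inl (i : ι) : ⟦inr (b i)⟧ₘ = ⟦inl (a i)⟧ₘ :=
  Quotient.sound (Relation.EqvGen.symm _ _ (Relation.EqvGen.rel _ _ ⟨i, rfl, rfl⟩))

theorem eq_of_mk_eq_mk_inl {x : α} (hx : x ∉ range a) {p : α ⊕ β}
    (h : ⟦p⟧ₘ = ⟦inl x⟧ₘ) : p = inl x := by
  refine (Setoid.apply_eq_of_mk_eq_eqvGen (f := (· = inl x)) ?_ h).mpr rfl
  rintro _ _ ⟨i, rfl, rfl⟩
  simpa using fun h => hx ⟨i, h⟩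

theorem eq_of_mk_eq_mk_inr {y : β} (hy : y ∉ range b) {p : α ⊕ β}
    (h : ⟦p⟧ₘ = ⟦inr y⟧ₘ) : p = inr y := by
  refine (Setoid.apply_eq_of_mk_eq_eqvGen (f := (· = inr y)) ?_ h).mpr rfl
  rintro _ _ ⟨i, rfl, rfl⟩
  simpa using fun h => hy ⟨i, h⟩

theorem mk_inl_injective (ha : Injective a) (hb : Injective b) :
    Injective fun i => ⟦inl (a i)⟧ₘ := by
  intro i i' h
  have : Nonempty ι := ⟨i⟩
  have key := Setoid.apply_eq_of_mk_eq_eqvGen (f := Sum.elim (invFun a) (invFun b)) ?_ h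
  · simpa only [elim_inl, leftInverse_invFun ha _] using key
  · rintro _ _ ⟨j, rfl, rfl⟩
    simp only [elim_inl, elim_inr, leftInverse_invFun ha _, leftInverse_invFun hb _]

end matchingSetoid

namespace matchingContraction

open matchingSetoid

theorem adj_mk_inl {i : ι} {v : Quotient (matchingSetoid a b)}
    (h : ⟦inl (a i)⟧ₘ ≠ v) : (matchingContraction a b).Adj ⟦inl (a i)⟧ₘ v := by
  induction v using Quotient.ind with
  | _ p =>
    rcases p with x | y
    · exact ⟨h, inr (b i), inl x, by simp, mk_inr_eq_mk_inl i, rfl⟩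
    · exact ⟨h, inl (a i), inr y, by simp, rfl, rfl⟩

theorem not_adj_mk_inl {x x' : α} (hx : x ∉ range a) (hx' : x' ∉ range a) :
    ¬ (matchingContraction a b).Adj ⟦inl x⟧ₘ ⟦inl x'⟧ₘ := by
  rintro ⟨-, u, u', huu', hu, hu'⟩
  rw [eq_of_mk_eq_mk_inl hx hu, eq_of_mk_eq_mk_inl hx' hu'] at huu'
  simp at huu'

theorem not_adj_mk_inr {y y' : β} (hy : y ∉ range b) (hy' : y' ∉ range b) :
    ¬ (matchingContraction a b).Adj ⟦inr y⟧ₘ ⟦inr y'⟧ₘ := by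
  rintro ⟨-, u, u', huu', hu, hu'⟩
  rw [eq_of_mk_eq_mk_inr hy hu, eq_of_mk_eq_mk_inr hy' hu'] at huu'
  simp at huu'

theorem colorable [Fintype ι] :
    (matchingContraction a b).Colorable (Fintype.card ι + 2) := by
  let S : ι ⊕ Bool → Set (Quotient (matchingSetoid a b))
    | inl i => {⟦inl (a i)⟧ₘ}
    | inr false => (fun x => ⟦inl x⟧ₘ) '' (range a)ᶜ
    | inr true => (fun y => ⟦inr y⟧ₘ) '' (range b)ᶜ
  suffices (matchingContraction a b).Colorable (Fintype.card (ι ⊕ Bool)) by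
    simpa using this
  refine SimpleGraph.colorable_of_isIndepSet_cover S ?_ ?_
  · rintro (i | _ | _)
    · exact Set.pairwise_singleton _ _
    · rintro _ ⟨x, hx, rfl⟩ _ ⟨x', hx', rfl⟩ -
      exact not_adj_mk_inl hx hx'
    · rintro _ ⟨y, hy, rfl⟩ _ ⟨y', hy', rfl⟩ -
      exact not_adj_mk_inr hy hy'
  · refine Quotient.ind ?_
    rintro (x | y)
    · by_cases hx : x ∈ range a
      · obtain ⟨i, rfl⟩ := hx
        exact ⟨inl i, rfl⟩
      · exact ⟨inr false, x, hx, rfl⟩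
    · by_cases hy : y ∈ range b
      · obtain ⟨i, rfl⟩ := hy
        exact ⟨inl i, mk_inr_eq_mk_inl i⟩
      · exact ⟨inr true, y, hy, rfl⟩

theorem not_cliqueFree [Fintype ι] (ha : Injective a) (hb : Injective b)
    {x : α} {y : β} (hx : x ∉ range a) (hy : y ∉ range b) :
    ¬ (matchingContraction a b).CliqueFree (Fintype.card ι + 2) := by
  classical
  have hxy : ⟦inl x⟧ₘ ≠ ⟦inr y⟧ₘ := fun h => by simpa using eq_of_mk_eq_mk_inl hx h.symm
  have hxi : ∀ i, ⟦inl (a i)⟧ₘ ≠ ⟦inl x⟧ₘ := fun i h =>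
    hx ⟨i, by simpa using eq_of_mk_eq_mk_inl hx h⟩
  have hyi : ∀ i, ⟦inl (a i)⟧ₘ ≠ ⟦inr y⟧ₘ := fun i h => by
    simpa using eq_of_mk_eq_mk_inr hy h
  let matched := Finset.univ.image fun i => ⟦inl (a i)⟧ₘ
  have hmatched : ∀ v ∈ matched, ∀ w, v ≠ w → (matchingContraction a b).Adj v w := by
    simp only [matched, Finset.mem_image, Finset.mem_univ, true_and]
    rintro _ ⟨i, rfl⟩ w
    exact adj_mk_inl
  refine fun hfree => hfree (insert ⟦inl x⟧ₘ (insert ⟦inr y⟧ₘ matched)) ⟨?_, ?_⟩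
  · rw [Finset.coe_insert, Finset.coe_insert, SimpleGraph.isClique_insert,
      SimpleGraph.isClique_insert]
    refine ⟨⟨fun v hv w _ hne => hmatched v hv w hne,
      fun w hw hne => (hmatched w hw _ hne.symm).symm⟩, ?_⟩
    rintro w (rfl | hw) hne
    · exact ⟨hxy, inl x, inr y, by simp, rfl, rfl⟩
    · exact (hmatched w hw _ hne.symm).symm
  · rw [Finset.card_insert_of_notMem, Finset.card_insert_of_notMem,
      Finset.card_image_of_injective _ (mk_inl_injective ha hb), Finset.card_univ]
    · simpa [matched] using hyi
    · simpa [matched, hxy] using hxi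

end matchingContraction

end MatchingContraction

theorem contract_matching_not_subgraph_general (N k j : ℕ) (hk2 : k ≤ N - 1)
    (hj : j < k)
    (a b : Fin k → Fin N) (ha : Function.Injective a) (hb : Function.Injective b)
    (a' b' : Fin j → Fin N) :
    let G := completeBipartiteGraph (Fin N) (Fin N)
    let sk : Setoid (Fin N ⊕ Fin N) :=
      Relation.EqvGen.setoid fun p q => ∃ i, p = Sum.inl (a i) ∧ q = Sum.inr (b i)
    let sj : Setoid (Fin N ⊕ Fin N) :=
      Relation.EqvGen.setoid fun p q => ∃ i, p = Sum.inl (a' i) ∧ q = Sum.inr (b' i)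
    let Mk := G.contractS sk
    let Mj := G.contractS sj
    ¬ ∃ f : Quotient sk ↪ Quotient sj, ∀ u v, Mk.Adj u v → Mj.Adj (f u) (f v) := by
  intro G sk sj Mk Mj ⟨f, hf⟩
  have hkN : Fintype.card (Fin k) < Fintype.card (Fin N) := by
    simp only [Fintype.card_fin]; omega
  obtain ⟨x, hx⟩ := exists_notMem_range_of_card_lt a hkN
  obtain ⟨y, hy⟩ := exists_notMem_range_of_card_lt b hkN
  have hMj : (matchingContraction a' b').CliqueFree (Fintype.card (Fin k) + 2) :=
    matchingContraction.colorable.cliqueFree (by simp only [Fintype.card_fin]; omega)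
  exact matchingContraction.not_cliqueFree ha hb hx hy
    (hMj.comap ⟨SimpleGraph.Hom.toCopy ⟨f, hf _ _⟩ f.injective⟩)

/-- For `1 ≤ k ≤ N - 1` and `j < k`, the graph `M_k` obtained from `K_{N,N}` by
contracting a matching of size `k` is not isomorphic to any subgraph of the graph `M_j`
obtained by contracting a matching of size `j`. -/
theorem contract_matching_not_subgraph (N k j : ℕ) (hk1 : 1 ≤ k) (hk2 : k ≤ N - 1)
    (hj : j < k)
    (a b : Fin k → Fin N) (ha : Function.Injective a) (hb : Function.Injective b)
    (a' b' : Fin j → Fin N) (ha' : Function.Injective a') (hb' : Function.Injective b') :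
    let G := completeBipartiteGraph (Fin N) (Fin N)
    let sk : Setoid (Fin N ⊕ Fin N) :=
      Relation.EqvGen.setoid fun p q => ∃ i, p = Sum.inl (a i) ∧ q = Sum.inr (b i)
    let sj : Setoid (Fin N ⊕ Fin N) :=
      Relation.EqvGen.setoid fun p q => ∃ i, p = Sum.inl (a' i) ∧ q = Sum.inr (b' i)
    let Mk := G.contractS sk
    let Mj := G.contractS sj
    ¬ ∃ f : Quotient sk ↪ Quotient sj, ∀ u v, Mk.Adj u v → Mj.Adj (f u) (f v) :=
  contract_matching_not_subgraph_general N k j hk2 hj a b ha hb a' b'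
end

section
/- The largest complete graph minor of the complete bipartite graph K_{N,N'} is K_{min(N,N')+1}. -/
/-- `H` is a minor of `G`: there is a minor model assigning to each vertex of `H`
a nonempty connected branch set in `G`, pairwise disjoint, with an edge of `G`
between the branch sets of any two adjacent vertices of `H`. -/
def SimpleGraph.IsMinorOf {α β : Type*} (H : SimpleGraph α) (G : SimpleGraph β) : Prop :=
  ∃ f : α → Set β,
    (∀ a, (f a).Nonempty) ∧
    (∀ a, (G.induce (f a)).Connected) ∧
    (Pairwise fun a b => Disjoint (f a) (f b)) ∧
    ∀ a b, H.Adj a b → ∃ u ∈ f a, ∃ v ∈ f b, G.Adj u v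

/-!
Contracting the edges `xᵢ yᵢ₋₁` (`1 ≤ i ≤ m - 1`) of a staircase in `K_{m,m}`, where
`m = min N N'`, leaves the `m + 1` branch sets `B₀ = {x₀}, Bᵢ = {xᵢ, yᵢ₋₁}, Bₘ = {yₘ₋₁}`; for
`i < j` the edge `xᵢ yⱼ₋₁` joins `Bᵢ` to `Bⱼ`. Conversely, in a `K_n` minor model at most one
branch set avoids a vertex cover `T`, since two such sets would lie in the independent set `Tᶜ`;
the remaining branch sets are disjoint and meet `T`, so `n ≤ #T + 1`. Either side of `K_{N,N'}`
is a vertex cover.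
-/

open Finset Function

namespace SimpleGraph

variable {ι α β : Type*}

theorem IsClique.induce_connected {G : SimpleGraph α} {s : Set α} (hs : G.IsClique s)
    (hne : s.Nonempty) : (G.induce s).Connected := by
  have := hne.to_subtype
  rw [induce_eq_top.2 hs]
  exact connected_top

theorem isMinorOf_of_connected_fibers {H : SimpleGraph ι} {G : SimpleGraph α} (π : α → ι)
    (hconn : ∀ i, (G.induce (π ⁻¹' {i})).Connected)
    (hadj : ∀ i j, H.Adj i j → ∃ u v, π u = i ∧ π v = j ∧ G.Adj u v) :
    H.IsMinorOf G := by
  refine ⟨fun i => π ⁻¹' {i}, fun i => ?_, hconn, fun i j hij => ?_, fun i j hij => ?_⟩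
  · obtain ⟨⟨u, hu⟩⟩ := (hconn i).nonempty
    exact ⟨u, hu⟩
  · exact (Set.disjoint_singleton.2 hij).preimage π
  · obtain ⟨u, v, hu, hv, huv⟩ := hadj i j hij
    exact ⟨u, hu, v, hv, huv⟩

theorem IsMinorOf.trans_isContained {H : SimpleGraph ι} {G : SimpleGraph α}
    {G' : SimpleGraph β} (h : H.IsMinorOf G) (hG : G ⊑ G') : H.IsMinorOf G' := by
  obtain ⟨f, hne, hconn, hdisj, hadj⟩ := h
  obtain ⟨φ⟩ := hG
  refine ⟨fun i => φ '' f i, fun i => (hne i).image φ, fun i => ?_,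
    fun i j hij => (Set.disjoint_image_iff φ.injective).2 (hdisj hij), fun i j hij => ?_⟩
  · let ψ : G.induce (f i) →g G'.induce (φ '' f i) :=
      ⟨fun v => ⟨φ v, Set.mem_image_of_mem φ v.2⟩, fun huv => φ.toHom.map_adj huv⟩
    refine (hconn i).map ψ ?_
    rintro ⟨_, v, hv, rfl⟩
    exact ⟨⟨v, hv⟩, rfl⟩
  · obtain ⟨u, hu, v, hv, huv⟩ := hadj i j hij
    exact ⟨φ u, Set.mem_image_of_mem φ hu, φ v, Set.mem_image_of_mem φ hv,
      φ.toHom.map_adj huv⟩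

theorem completeBipartiteGraph_isContained_of_embedding {α' β' : Type*} (e : α ↪ α')
    (e' : β ↪ β') : completeBipartiteGraph α β ⊑ completeBipartiteGraph α' β' :=
  ⟨⟨⟨Sum.map e e', by rintro (a | b) (a' | b') h <;> simp_all⟩,
    Sum.map_injective.2 ⟨e.injective, e'.injective⟩⟩⟩

theorem completeBipartiteGraph_isClique_fiber {p : α → ι} {q : β → ι} (hp : Injective p)
    (hq : Injective q) (i : ι) :
    (completeBipartiteGraph α β).IsClique (Sum.elim p q ⁻¹' {i}) := by
  rintro (a | b) ha (a' | b') ha' hne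
  · exact (hne (congrArg _ (hp (ha.trans ha'.symm)))).elim
  · simp
  · simp
  · exact (hne (congrArg _ (hq (ha.trans ha'.symm)))).elim

theorem top_isMinorOf_completeBipartiteGraph_fin (k : ℕ) :
    (⊤ : SimpleGraph (Fin (k + 2))).IsMinorOf
      (completeBipartiteGraph (Fin (k + 1)) (Fin (k + 1))) := by
  refine isMinorOf_of_connected_fibers (Sum.elim Fin.castSucc Fin.succ) (fun i => ?_) ?_
  · refine (completeBipartiteGraph_isClique_fiber (Fin.castSucc_injective _)
      (Fin.succ_injective _) i).induce_connected ?_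
    rcases Fin.eq_castSucc_or_eq_last i with ⟨j, rfl⟩ | rfl
    · exact ⟨Sum.inl j, rfl⟩
    · exact ⟨Sum.inr (Fin.last k), rfl⟩
  · intro i j hij
    rcases lt_or_gt_of_ne hij with h | h
    · have hi : i ≠ Fin.last _ := Fin.ne_last_of_lt h
      have hj : j ≠ 0 := Fin.ne_zero_of_lt h
      exact ⟨.inl (i.castPred hi), .inr (j.pred hj), i.castSucc_castPred hi, j.succ_pred hj,
        by simp⟩
    · have hi : i ≠ 0 := Fin.ne_zero_of_lt h
      have hj : j ≠ Fin.last _ := Fin.ne_last_of_lt h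
      exact ⟨.inr (i.pred hi), .inl (j.castPred hj), i.succ_pred hi, j.castSucc_castPred hj,
        by simp⟩

theorem IsMinorOf.card_le_card_add_one_of_isVertexCover [Fintype ι] {G : SimpleGraph α}
    (h : (⊤ : SimpleGraph ι).IsMinorOf G) {T : Finset α} (hT : G.IsVertexCover T) :
    Fintype.card ι ≤ #T + 1 := by
  classical
  obtain ⟨f, -, -, hdisj, hadj⟩ := h
  let I := univ.filter fun i => ∃ v ∈ T, v ∈ f i
  have hI : #I ≤ #T := by
    refine card_le_card_of_forall_subsingleton (fun i v => v ∈ f i)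
      (fun i hi => by simpa [I] using hi) fun v _ i hi j hj => ?_
    by_contra hij
    exact (hdisj hij).ne_of_mem hi.2 hj.2 rfl
  have hIc : #Iᶜ ≤ 1 := by
    refine card_le_one.2 fun i hi j hj => ?_
    by_contra hij
    obtain ⟨u, hu, v, hv, huv⟩ := hadj i j hij
    simp only [I, mem_compl, mem_filter, mem_univ, true_and, not_exists, not_and] at hi hj
    exact (hT huv).elim (fun huT => hi u huT hu) fun hvT => hj v hvT hv
  calc Fintype.card ι = #I + #Iᶜ := (card_add_card_compl I).symm
    _ ≤ #T + 1 := add_le_add hI hIc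

theorem card_le_of_top_isMinorOf_completeBipartiteGraph [Fintype ι] [Fintype α] [Fintype β]
    (h : (⊤ : SimpleGraph ι).IsMinorOf (completeBipartiteGraph α β)) :
    Fintype.card ι ≤ min (Fintype.card α) (Fintype.card β) + 1 := by
  have hα := h.card_le_card_add_one_of_isVertexCover (T := univ.map .inl)
    (by rintro (a | b) (a' | b') h <;> simp_all)
  have hβ := h.card_le_card_add_one_of_isVertexCover (T := univ.map .inr)
    (by rintro (a | b) (a' | b') h <;> simp_all)
  simp only [card_map, card_univ] at hα hβ
  omega

end SimpleGraph

/-- The largest complete graph minor of `K_{N,N'}` is `K_{min(N,N')+1}`: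
`K_{min(N,N')+1}` is a minor of `K_{N,N'}` and `K_{min(N,N')+2}` is not. -/
theorem largest_clique_minor_completeBipartite (N N' : ℕ) (hN : 1 ≤ N) (hN' : 1 ≤ N') :
    SimpleGraph.IsMinorOf (⊤ : SimpleGraph (Fin (min N N' + 1)))
        (completeBipartiteGraph (Fin N) (Fin N')) ∧
      ¬ SimpleGraph.IsMinorOf (⊤ : SimpleGraph (Fin (min N N' + 2)))
          (completeBipartiteGraph (Fin N) (Fin N')) := by
  obtain ⟨k, hk⟩ : ∃ k, min N N' = k + 1 := ⟨min N N' - 1, by omega⟩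
  refine ⟨?_, fun h => ?_⟩
  · rw [hk]
    exact (SimpleGraph.top_isMinorOf_completeBipartiteGraph_fin k).trans_isContained
      (SimpleGraph.completeBipartiteGraph_isContained_of_embedding (Fin.castLEEmb (by omega))
        (Fin.castLEEmb (by omega)))
  · have := SimpleGraph.card_le_of_top_isMinorOf_completeBipartiteGraph h
    simp only [Fintype.card_fin] at this
    omega
end
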